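/- arXiv:1211.3698 — 7 statements merged into one kernel-verified Lean document; each statement's English description precedes it below -/
import Mathlib

section
/- For every θ ∈ (0, π) and every real s, the infimum of ∫_{-θ}^{θ} ((u')² - u²) over all u ∈ W₀^{1,2}(-θ, θ) with ∫_{-θ}^{θ} u = s equals s²·cos θ / (2(sin θ - θ·cos θ)). -/
open Real MeasureTheory Set intervalIntegral

/-- `u ∈ W^{1,2}_0(-θ,θ)` with weak derivative `u'`: `u'` and `(u')^2` are
integrable on `(-θ,θ)`, `u` is the primitive of `u'` starting from `-θ`
(hence absolutely continuous with `u(-θ)=0`), and `u(θ)=0`. -/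
def MemW120 (θ : ℝ) (u u' : ℝ → ℝ) : Prop :=
  IntervalIntegrable u' volume (-θ) θ ∧
  IntervalIntegrable (fun t => (u' t)^2) volume (-θ) θ ∧
  (∀ x ∈ Set.Icc (-θ) θ, u x = ∫ t in (-θ)..x, u' t) ∧
  u θ = 0

/-!
The infimum is attained at `u₀ t = c (cos t - cos θ)`, with `c` chosen so that `∫ u₀ = s`.
For the lower bound write `u = u₀ + w`; then `w` vanishes at `±θ`, and so does its primitive `W`
because `∫ w = 0`. The functions `p, q, r` below solve the Riccati system
`p' = -(1 + p² + 2q)`, `q' = -r - p q`, `r' = -q²` on `(-π, π)`, which makes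
`(w')² - w² - (p w² + 2 q W w + r W²)'` the perfect square `(w' - p w - q W)²`.
Since `u₀'' + u₀` is constant and `∫ w = 0`, the cross terms between `u₀` and `w` are exact
derivatives too, so `(u')² - u² ≥ Ψ'` a.e. for an absolutely continuous calibration `Ψ` whose
increment over `[-θ, θ]` is the energy of `u₀`.
-/

theorem sub_le_integral_of_ae_hasDerivAt_le {Ψ f : ℝ → ℝ} {a b : ℝ} (hab : a ≤ b)
    (hΨ : AbsolutelyContinuousOnInterval Ψ a b) (hf : IntervalIntegrable f volume a b)
    (hderiv : ∀ᵐ t, t ∈ Ioo a b → ∃ d, HasDerivAt Ψ d t ∧ d ≤ f t) :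
    Ψ b - Ψ a ≤ ∫ t in a..b, f t := by
  rw [← hΨ.integral_deriv_eq_sub]
  refine integral_mono_ae_restrict hab hΨ.intervalIntegrable_deriv hf ?_
  rw [← Measure.restrict_congr_set Ioo_ae_eq_Icc, Filter.EventuallyLE,
    ae_restrict_iff' measurableSet_Ioo]
  filter_upwards [hderiv] with t ht hmem
  obtain ⟨d, hd, hle⟩ := ht hmem
  rwa [hd.deriv]

theorem HasDerivAt.riccati_quadratic {p q r w W : ℝ → ℝ} {w' t : ℝ}
    (hp : HasDerivAt p (-(1 + p t ^ 2 + 2 * q t)) t)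
    (hq : HasDerivAt q (-r t - p t * q t) t) (hr : HasDerivAt r (-q t ^ 2) t)
    (hw : HasDerivAt w w' t) (hW : HasDerivAt W (w t) t) :
    HasDerivAt (fun t => p t * w t ^ 2 + 2 * q t * W t * w t + r t * W t ^ 2)
      (w' ^ 2 - w t ^ 2 - (w' - p t * w t - q t * W t) ^ 2) t := by
  refine (((hp.fun_mul (hw.fun_pow 2)).fun_add (((hq.const_mul 2).fun_mul hW).fun_mul hw)).fun_add
    (hr.fun_mul (hW.fun_pow 2))).congr_deriv ?_
  ring

theorem mul_sin_nonneg_of_abs_le_pi {t : ℝ} (ht : |t| ≤ π) : 0 ≤ t * sin t := by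
  rcases le_total 0 t with h | h
  · exact mul_nonneg h (sin_nonneg_of_nonneg_of_le_pi h (abs_of_nonneg h ▸ ht))
  · refine mul_nonneg_of_nonpos_of_nonpos h ?_
    have := sin_nonneg_of_nonneg_of_le_pi (neg_nonneg.mpr h) (abs_of_nonpos h ▸ ht)
    rwa [sin_neg, neg_nonneg] at this

theorem sin_sub_mul_cos_pos {θ : ℝ} (hθ : θ ∈ Ioo 0 π) : 0 < sin θ - θ * cos θ := by
  have hsin := sin_pos_of_pos_of_lt_pi hθ.1 hθ.2
  rcases lt_or_ge θ (π / 2) with h | h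
  · have hcos : 0 < cos θ := cos_pos_of_mem_Ioo ⟨by linarith [hθ.1], h⟩
    have := lt_tan hθ.1 h
    rw [tan_eq_sin_div_cos, lt_div_iff₀ hcos] at this
    linarith
  · have : cos θ ≤ 0 := cos_nonpos_of_pi_div_two_le_of_le h (by linarith [hθ.2])
    nlinarith [hθ.1]

noncomputable def riccatiDen (t : ℝ) : ℝ := 2 + 2 * cos t + t * sin t

noncomputable def riccatiP (t : ℝ) : ℝ := (t * cos t - sin t) / riccatiDen t

noncomputable def riccatiQ (t : ℝ) : ℝ := -(1 + cos t) / riccatiDen t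

noncomputable def riccatiR (t : ℝ) : ℝ := -sin t / riccatiDen t

theorem riccatiDen_pos {t : ℝ} (ht : t ∈ Ioo (-π) π) : 0 < riccatiDen t := by
  have habs : |t| < π := abs_lt.mpr ht
  have hcos : -1 < cos t := by
    simpa [cos_pi, cos_abs] using cos_lt_cos_of_nonneg_of_le_pi (abs_nonneg t) le_rfl habs
  have := mul_sin_nonneg_of_abs_le_pi habs.le
  unfold riccatiDen
  linarith

theorem hasDerivAt_riccatiDen (t : ℝ) : HasDerivAt riccatiDen (t * cos t - sin t) t := by
  refine (((hasDerivAt_cos t).const_mul 2).const_add 2 |>.add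
    ((hasDerivAt_id t).mul (hasDerivAt_sin t))).congr_deriv ?_
  simp only [id]
  ring

theorem hasDerivAt_riccatiP {t : ℝ} (ht : t ∈ Ioo (-π) π) :
    HasDerivAt riccatiP (-(1 + riccatiP t ^ 2 + 2 * riccatiQ t)) t := by
  have hD := (riccatiDen_pos ht).ne'
  have hnum : HasDerivAt (fun t => t * cos t - sin t) (-(t * sin t)) t :=
    ((hasDerivAt_id t).mul (hasDerivAt_cos t)).sub (hasDerivAt_sin t) |>.congr_deriv (by simp)
  refine (hnum.div (hasDerivAt_riccatiDen t) hD).congr_deriv ?_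
  unfold riccatiP riccatiQ
  field_simp
  unfold riccatiDen
  ring

theorem hasDerivAt_riccatiQ {t : ℝ} (ht : t ∈ Ioo (-π) π) :
    HasDerivAt riccatiQ (-riccatiR t - riccatiP t * riccatiQ t) t := by
  have hD := (riccatiDen_pos ht).ne'
  have hnum : HasDerivAt (fun t => -(1 + cos t)) (sin t) t :=
    ((hasDerivAt_cos t).const_add 1).neg.congr_deriv (by ring)
  refine (hnum.div (hasDerivAt_riccatiDen t) hD).congr_deriv ?_
  unfold riccatiP riccatiQ riccatiR
  field_simp

theorem hasDerivAt_riccatiR {t : ℝ} (ht : t ∈ Ioo (-π) π) :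
    HasDerivAt riccatiR (-riccatiQ t ^ 2) t := by
  have hD := (riccatiDen_pos ht).ne'
  refine ((hasDerivAt_sin t).fun_neg.div (hasDerivAt_riccatiDen t) hD).congr_deriv ?_
  unfold riccatiQ
  field_simp
  unfold riccatiDen
  linear_combination -sin_sq_add_cos_sq t

theorem contDiffOn_div_riccatiDen {f : ℝ → ℝ} (hf : ContDiff ℝ 1 f) :
    ContDiffOn ℝ 1 (fun t => f t / riccatiDen t) (Ioo (-π) π) :=
  hf.contDiffOn.div (by unfold riccatiDen; fun_prop : ContDiff ℝ 1 riccatiDen).contDiffOn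
    fun _ ht => (riccatiDen_pos ht).ne'

noncomputable def energyPrimitive (c k t : ℝ) : ℝ :=
  c ^ 2 * (2 * k * sin t - k ^ 2 * t - sin t * cos t)

/-- The calibration `Ψ` of the proof idea, for `u = w + c (cos t - k)` and `W' = w`. -/
noncomputable def calibration (c k : ℝ) (w W : ℝ → ℝ) (t : ℝ) : ℝ :=
  riccatiP t * w t ^ 2 + 2 * riccatiQ t * W t * w t + riccatiR t * W t ^ 2
    + 2 * c * k * W t - 2 * c * sin t * w t + energyPrimitive c k t

theorem hasDerivAt_energyPrimitive (c k t : ℝ) :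
    HasDerivAt (energyPrimitive c k) ((-(c * sin t)) ^ 2 - (c * (cos t - k)) ^ 2) t := by
  refine (((((hasDerivAt_sin t).const_mul (2 * k)).sub ((hasDerivAt_id t).const_mul (k ^ 2))).sub
    ((hasDerivAt_sin t).mul (hasDerivAt_cos t))).const_mul (c ^ 2)).congr_deriv ?_
  ring

theorem energyPrimitive_sub (c θ : ℝ) :
    energyPrimitive c (cos θ) θ - energyPrimitive c (cos θ) (-θ) =
      2 * c ^ 2 * cos θ * (sin θ - θ * cos θ) := by
  simp only [energyPrimitive, sin_neg, cos_neg]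
  ring

theorem absolutelyContinuousOnInterval_calibration {a b c k : ℝ} {w W : ℝ → ℝ}
    (hab : uIcc a b ⊆ Ioo (-π) π) (hw : AbsolutelyContinuousOnInterval w a b)
    (hW : AbsolutelyContinuousOnInterval W a b) :
    AbsolutelyContinuousOnInterval (calibration c k w W) a b := by
  have hsmooth : ∀ {f : ℝ → ℝ}, ContDiff ℝ 1 f → AbsolutelyContinuousOnInterval f a b :=
    fun hf => hf.contDiffOn.absolutelyContinuousOnInterval
  have hriccati : ∀ {f : ℝ → ℝ}, ContDiff ℝ 1 f →
      AbsolutelyContinuousOnInterval (fun t => f t / riccatiDen t) a b :=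
    fun hf => ((contDiffOn_div_riccatiDen hf).mono hab).absolutelyContinuousOnInterval
  have hp : AbsolutelyContinuousOnInterval riccatiP a b := hriccati (by fun_prop)
  have hq : AbsolutelyContinuousOnInterval riccatiQ a b := hriccati (by fun_prop)
  have hr : AbsolutelyContinuousOnInterval riccatiR a b := hriccati (by fun_prop)
  have hsin : AbsolutelyContinuousOnInterval (fun t => 2 * c * sin t) a b :=
    hsmooth (by fun_prop)
  have hE : AbsolutelyContinuousOnInterval (energyPrimitive c k) a b :=
    hsmooth (by unfold energyPrimitive; fun_prop)
  unfold calibration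
  simp only [pow_two]
  exact (((((hp.fun_mul (hw.fun_mul hw)).fun_add
    (((hq.const_mul 2).fun_mul hW).fun_mul hw)).fun_add (hr.fun_mul (hW.fun_mul hW))).fun_add
    (hW.const_mul (2 * c * k))).fun_sub (hsin.fun_mul hw)).fun_add hE

theorem hasDerivAt_calibration {c k t w' : ℝ} {w W : ℝ → ℝ} (ht : t ∈ Ioo (-π) π)
    (hw : HasDerivAt w w' t) (hW : HasDerivAt W (w t) t) :
    HasDerivAt (calibration c k w W) ((w' - c * sin t) ^ 2 - (w t + c * (cos t - k)) ^ 2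
      - (w' - riccatiP t * w t - riccatiQ t * W t) ^ 2) t := by
  have hquad := HasDerivAt.riccati_quadratic (hasDerivAt_riccatiP ht) (hasDerivAt_riccatiQ ht)
    (hasDerivAt_riccatiR ht) hw hW
  refine (((hquad.fun_add (hW.const_mul (2 * c * k))).fun_sub
    (((hasDerivAt_sin t).const_mul (2 * c)).fun_mul hw)).fun_add
    (hasDerivAt_energyPrimitive c k t)).congr_deriv ?_
  ring

theorem integral_mul_sin (c θ x : ℝ) :
    ∫ t in (-θ)..x, c * sin t = c * (cos θ - cos x) := by
  rw [intervalIntegral.integral_const_mul, integral_sin, cos_neg]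

theorem integral_mul_cos_sub_cos (c θ : ℝ) :
    ∫ t in (-θ)..θ, c * (cos t - cos θ) = 2 * c * (sin θ - θ * cos θ) := by
  rw [intervalIntegral.integral_const_mul,
    intervalIntegral.integral_sub intervalIntegrable_cos intervalIntegrable_const, integral_cos,
    intervalIntegral.integral_const, sin_neg, smul_eq_mul]
  ring

theorem memW120_mul_cos_sub_cos (c θ : ℝ) :
    MemW120 θ (fun t => c * (cos t - cos θ)) (fun t => -(c * sin t)) := by
  refine ⟨(by fun_prop : Continuous _).intervalIntegrable _ _,
    (by fun_prop : Continuous _).intervalIntegrable _ _, fun x _ => ?_, by simp⟩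
  rw [intervalIntegral.integral_neg, integral_mul_sin]
  ring

theorem integral_energy_mul_cos_sub_cos (c θ : ℝ) :
    ∫ t in (-θ)..θ, ((-(c * sin t)) ^ 2 - (c * (cos t - cos θ)) ^ 2) =
      2 * c ^ 2 * cos θ * (sin θ - θ * cos θ) := by
  rw [integral_eq_sub_of_hasDerivAt (fun t _ => hasDerivAt_energyPrimitive c (cos θ) t)
    ((by fun_prop : Continuous _).intervalIntegrable _ _), energyPrimitive_sub]

theorem le_integral_sq_deriv_sub_sq_of_memW120 {θ s : ℝ} (hθ : θ ∈ Ioo 0 π) {u u' : ℝ → ℝ}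
    (hu : MemW120 θ u u') (hs : ∫ t in (-θ)..θ, u t = s) :
    s ^ 2 * cos θ / (2 * (sin θ - θ * cos θ)) ≤ ∫ t in (-θ)..θ, ((u' t) ^ 2 - (u t) ^ 2) := by
  obtain ⟨hu', hu'2, hprim, huθ⟩ := hu
  have hab : -θ ≤ θ := by linarith [hθ.1]
  have hI : uIcc (-θ) θ ⊆ Ioo (-π) π := by
    rw [uIcc_of_le hab]; exact Icc_subset_Ioo (by linarith [hθ.2]) hθ.2
  have hK := (sin_sub_mul_cos_pos hθ).ne'
  obtain ⟨c, hc⟩ : ∃ c, 2 * c * (sin θ - θ * cos θ) = s :=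
    ⟨s / (2 * (sin θ - θ * cos θ)), by field_simp⟩
  set w' := fun t => u' t + c * sin t
  set w := fun x => ∫ t in (-θ)..x, w' t
  set W := fun x => ∫ t in (-θ)..x, w t
  have hw'_int : IntervalIntegrable w' volume (-θ) θ :=
    hu'.add ((by fun_prop : Continuous _).intervalIntegrable _ _)
  have hw_eq : ∀ x ∈ Icc (-θ) θ, w x = u x - c * (cos x - cos θ) := by
    intro x hx
    have hsub : uIcc (-θ) x ⊆ uIcc (-θ) θ := uIcc_subset_uIcc_left (uIcc_of_le hab ▸ hx)
    simp only [w, w']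
    rw [intervalIntegral.integral_add (hu'.mono_set hsub)
      ((by fun_prop : Continuous _).intervalIntegrable _ _), integral_mul_sin, hprim x hx]
    ring
  have hw_ac := hw'_int.absolutelyContinuousOnInterval_intervalIntegral left_mem_uIcc
  have hw_int : IntervalIntegrable w volume (-θ) θ := hw_ac.continuousOn.intervalIntegrable
  have hW_ac := hw_int.absolutelyContinuousOnInterval_intervalIntegral left_mem_uIcc
  have hu_cont : ContinuousOn u (uIcc (-θ) θ) :=
    (hu'.absolutelyContinuousOnInterval_intervalIntegral left_mem_uIcc).continuousOn.congr
      fun x hx => hprim x (uIcc_of_le hab ▸ hx)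
  have hwθ : w θ = 0 := by rw [hw_eq θ ⟨hab, le_rfl⟩, huθ]; ring
  have hWθ : W θ = 0 := by
    simp only [W]
    rw [intervalIntegral.integral_congr fun x hx => hw_eq x (uIcc_of_le hab ▸ hx),
      intervalIntegral.integral_sub hu_cont.intervalIntegrable
        ((by fun_prop : Continuous _).intervalIntegrable _ _),
      hs, integral_mul_cos_sub_cos, hc, sub_self]
  calc s ^ 2 * cos θ / (2 * (sin θ - θ * cos θ))
      = calibration c (cos θ) w W θ - calibration c (cos θ) w W (-θ) := by
        have hw0 : w (-θ) = 0 := intervalIntegral.integral_same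
        have hW0 : W (-θ) = 0 := intervalIntegral.integral_same
        simp only [calibration, hwθ, hWθ, hw0, hW0, zero_pow two_ne_zero, mul_zero, add_zero,
          sub_zero, zero_add]
        rw [energyPrimitive_sub, ← hc]
        field_simp
    _ ≤ ∫ t in (-θ)..θ, ((u' t) ^ 2 - (u t) ^ 2) := by
      refine sub_le_integral_of_ae_hasDerivAt_le hab
        (absolutelyContinuousOnInterval_calibration hI hw_ac hW_ac)
        (hu'2.sub (hu_cont.pow 2).intervalIntegrable) ?_
      filter_upwards [hw'_int.ae_hasDerivAt_integral, hw_int.ae_hasDerivAt_integral]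
        with t hw_deriv hW_deriv ht
      have htI : t ∈ uIcc (-θ) θ := uIcc_of_le hab ▸ Ioo_subset_Icc_self ht
      refine ⟨_, hasDerivAt_calibration (hI htI) (hw_deriv htI (-θ) left_mem_uIcc)
        (hW_deriv htI (-θ) left_mem_uIcc), ?_⟩
      rw [hw_eq t (Ioo_subset_Icc_self ht), add_sub_cancel_right, sub_add_cancel]
      exact sub_le_self _ (sq_nonneg _)

/-- For every θ ∈ (0, π) and every real s, the infimum of
∫ ((u')² - u²) over u ∈ W₀^{1,2}(-θ,θ) with ∫ u = s equals
s² cos θ / (2(sin θ - θ cos θ)). -/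
theorem stmt0 (θ s : ℝ) (hθ : θ ∈ Set.Ioo 0 π) :
    IsGLB {v : ℝ | ∃ u u' : ℝ → ℝ, MemW120 θ u u' ∧
        (∫ t in (-θ)..θ, u t) = s ∧
        v = ∫ t in (-θ)..θ, ((u' t)^2 - (u t)^2)}
      (s^2 * Real.cos θ / (2 * (Real.sin θ - θ * Real.cos θ))) := by
  refine ⟨?_, fun b hb => hb ?_⟩
  · rintro v ⟨u, u', hu, hs, rfl⟩
    exact le_integral_sq_deriv_sub_sq_of_memW120 hθ hu hs
  · have hK := (sin_sub_mul_cos_pos hθ).ne'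
    obtain ⟨c, hc⟩ : ∃ c, 2 * c * (sin θ - θ * cos θ) = s :=
      ⟨s / (2 * (sin θ - θ * cos θ)), by field_simp⟩
    refine ⟨_, _, memW120_mul_cos_sub_cos c θ, by rw [integral_mul_cos_sub_cos, hc], ?_⟩
    rw [integral_energy_mul_cos_sub_cos, ← hc]
    field_simp
end

section
/- Poincaré-type inequality for functions with small mean: for every θ ∈ (0,π), setting M(θ) = (1/θ)·2π²/(π² - θ²), if u ∈ W₀^{1,2}(-θ,θ) satisfies (∫_{-θ}^{θ} u)² ≤ (1/M(θ)) ∫_{-θ}^{θ} u², then ∫_{-θ}^{θ} ((u')² - u²) ≥ (1/4)(1 - θ²/π²) ∫_{-θ}^{θ} (u')² + (1/2)(π²/θ² - 1) ∫_{-θ}^{θ} u². -/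
open Real MeasureTheory Set intervalIntegral

/-!
Since `u(-θ) = u(θ) = 0`, `u` extends `2θ`-periodically and its Fourier coefficients on
`(-θ, θ]` satisfy `ĉₙ(u') = (iπn/θ) ĉₙ(u)`; as `u` is merely absolutely continuous, the
integration by parts behind this is done by Fubini on the triangle `t ≤ x`. Parseval then
gives Wirtinger's inequality `∫ u'² ≥ (π/θ)² (∫ u² - (∫ u)²/(2θ))`. The mean hypothesis
bounds the subtracted term, so `∫ u'² ≥ (3π² + θ²)/(4θ²) ∫ u²`, and this implies the claim
because `(3π² + θ²)² - 8π²(π² + θ²) = (π² - θ²)² ≥ 0`.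
-/

open Complex

theorem continuousOn_Icc_of_eq_primitive {E : Type*} [NormedAddCommGroup E] [NormedSpace ℝ E]
    {a b : ℝ} (hab : a ≤ b) {F f : ℝ → E} (hf : IntervalIntegrable f volume a b)
    (hF : ∀ x ∈ Icc a b, F x = ∫ t in a..x, f t) : ContinuousOn F (Icc a b) := by
  refine ContinuousOn.congr ?_ hF
  simpa [uIcc_of_le hab] using continuousOn_primitive_interval' hf left_mem_uIcc

theorem integral_primitive_mul_deriv {𝕜 : Type*} [RCLike 𝕜] {a b : ℝ} (hab : a ≤ b)
    {f g g' : ℝ → 𝕜} (hf : IntervalIntegrable f volume a b)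
    (hg : ∀ x, HasDerivAt g (g' x) x) (hg' : Continuous g') :
    ∫ x in a..b, (∫ t in a..x, f t) * g' x = ∫ t in a..b, f t * (g b - g t) := by
  set μ := volume.restrict (Ioc a b)
  set K : ℝ → ℝ → 𝕜 := fun t x =>
    {p : ℝ × ℝ | p.1 ≤ p.2}.indicator (fun p => f p.1 * g' p.2) (t, x)
  have hK : Integrable (Function.uncurry K) (μ.prod μ) :=
    (hf.1.mul_prod hg'.integrableOn_Ioc).indicator
      (measurableSet_le measurable_fst measurable_snd)
  have inner_t : ∀ x ∈ Ioc a b, ∫ t, K t x ∂μ = (∫ t in a..x, f t) * g' x := by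
    intro x hx
    have hKx : (K · x) = (Iic x).indicator (fun t => f t * g' x) := by
      ext t; by_cases h : t ≤ x <;> simp [K, h]
    rw [hKx, setIntegral_indicator measurableSet_Iic, Ioc_inter_Iic, min_eq_right hx.2,
      MeasureTheory.integral_mul_const, integral_of_le hx.1.le]
  have inner_x : ∀ t ∈ Ioc a b, ∫ x, K t x ∂μ = f t * (g b - g t) := by
    intro t ht
    have hKt : (K t ·) = (Ici t).indicator (fun x => f t * g' x) := by
      ext x; by_cases h : t ≤ x <;> simp [K, h]
    have hIci : Ioc a b ∩ Ici t = Icc t b := by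
      ext x; simp only [mem_inter_iff, mem_Ioc, mem_Ici, mem_Icc]
      constructor
      · rintro ⟨⟨-, hxb⟩, htx⟩; exact ⟨htx, hxb⟩
      · rintro ⟨htx, hxb⟩; exact ⟨⟨ht.1.trans_le htx, hxb⟩, htx⟩
    rw [hKt, setIntegral_indicator measurableSet_Ici, hIci, MeasureTheory.integral_const_mul,
      integral_Icc_eq_integral_Ioc, ← integral_of_le ht.2,
      integral_eq_sub_of_hasDerivAt (fun x _ => hg x) (hg'.intervalIntegrable _ _)]
  rw [integral_of_le hab, integral_of_le hab, ← setIntegral_congr_fun measurableSet_Ioc inner_t,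
    ← setIntegral_congr_fun measurableSet_Ioc inner_x]
  exact (integral_integral_swap hK).symm

theorem fourierCoeffOn_eq_mul_fourierCoeffOn_primitive {a b : ℝ} (hab : a < b) {f : ℝ → ℂ}
    (hf : IntervalIntegrable f volume a b) (hf0 : ∫ t in a..b, f t = 0) (n : ℤ) :
    fourierCoeffOn hab f n =
      2 * π * I * n / (b - a) * fourierCoeffOn hab (fun x => ∫ t in a..x, f t) n := by
  have : Fact (0 < b - a) := ⟨sub_pos.2 hab⟩
  simp only [fourierCoeffOn_eq_integral, smul_eq_mul, Complex.real_smul]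
  set e : ℝ → ℂ := fun x => fourier (-n) (x : AddCircle (b - a))
  set c : ℂ := -2 * π * I * n / ((b - a : ℝ) : ℂ)
  have he : Continuous e := (map_continuous _).comp (AddCircle.continuous_mk' _)
  have he_period : e b = e a := by
    simp only [e]; congr 1; simpa using AddCircle.coe_add_period (b - a) a
  have hparts : ∫ x in a..b, (∫ t in a..x, f t) * (c * e x) = ∫ t in a..b, f t * (e b - e t) :=
    integral_primitive_mul_deriv hab.le hf (hasDerivAt_fourier_neg (b - a) n)
      (continuous_const.mul he)
  have key : ∫ t in a..b, e t * f t = -c * ∫ x in a..b, e x * ∫ t in a..x, f t := by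
    calc ∫ t in a..b, e t * f t
        = (∫ t in a..b, f t) * e b - ∫ t in a..b, f t * (e b - e t) := by
          simp only [mul_sub, integral_sub (hf.mul_const _) (hf.mul_continuousOn he.continuousOn),
            intervalIntegral.integral_mul_const, mul_comm (e _)]; ring
      _ = -c * ∫ x in a..b, e x * ∫ t in a..x, f t := by
          rw [← hparts, hf0, ← intervalIntegral.integral_const_mul]
          simp only [zero_mul, zero_sub, ← intervalIntegral.integral_neg]
          congr 1; funext x; ring
  rw [key]
  simp only [c]
  push_cast
  ring

theorem wirtinger_primitive {a b : ℝ} (hab : a < b) {f : ℝ → ℂ}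
    (hf : MemLp f 2 (volume.restrict (Ioc a b))) (hf0 : ∫ t in a..b, f t = 0) :
    (2 * π / (b - a)) ^ 2 * ((∫ x in a..b, ‖∫ t in a..x, f t‖ ^ 2) -
        ‖∫ x in a..b, ∫ t in a..x, f t‖ ^ 2 / (b - a)) ≤ ∫ x in a..b, ‖f x‖ ^ 2 := by
  set F : ℝ → ℂ := fun x => ∫ t in a..x, f t
  have hT : 0 < b - a := sub_pos.2 hab
  have hf_int : IntervalIntegrable f volume a b :=
    (intervalIntegrable_iff_integrableOn_Ioc_of_le hab.le).2 (hf.integrable one_le_two)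
  have hF_cont : ContinuousOn F (Icc a b) :=
    continuousOn_Icc_of_eq_primitive hab.le hf_int fun _ _ => rfl
  have hF : MemLp F 2 (volume.restrict (Ioc a b)) := by
    rw [memLp_two_iff_integrable_sq_norm
      ((hF_cont.mono Ioc_subset_Icc_self).aestronglyMeasurable measurableSet_Ioc)]
    exact ((hF_cont.norm.pow 2).integrableOn_Icc).mono_set Ioc_subset_Icc_self
  have hcoeff := fourierCoeffOn_eq_mul_fourierCoeffOn_primitive hab hf_int hf0
  have hcoeff_zero : fourierCoeffOn hab F 0 = (b - a)⁻¹ • ∫ x in a..b, F x := by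
    simp [fourierCoeffOn_eq_integral]
  have hterm : ∀ n, (2 * π / (b - a)) ^ 2 * Function.update (‖fourierCoeffOn hab F ·‖ ^ 2) 0 0 n
      ≤ ‖fourierCoeffOn hab f n‖ ^ 2 := by
    intro n
    rcases eq_or_ne n 0 with rfl | hn
    · simp
    · have hn1 : (1 : ℝ) ≤ |(n : ℝ)| := by exact_mod_cast Int.one_le_abs hn
      have hnorm : ‖2 * π * I * n / (b - a)‖ = 2 * π / (b - a) * |(n : ℝ)| := by
        rw [norm_div, norm_mul, norm_mul, norm_mul, norm_I]
        simp only [norm_real, Real.norm_eq_abs, abs_of_pos pi_pos, Complex.norm_ofNat,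
          norm_intCast, ← ofReal_sub, abs_of_pos hT, mul_one]
        ring
      rw [Function.update_of_ne hn, hcoeff n, norm_mul, hnorm, mul_pow, mul_pow]
      gcongr
      exact le_mul_of_one_le_right (by positivity) (one_le_pow₀ hn1)
  have hle := hasSum_le hterm (((hasSum_sq_fourierCoeffOn hab hF).update 0 0).mul_left _)
    (hasSum_sq_fourierCoeffOn hab hf)
  rw [hcoeff_zero, norm_smul, Real.norm_of_nonneg (inv_nonneg.2 hT.le), smul_eq_mul,
    smul_eq_mul] at hle
  calc _ = (b - a) * ((2 * π / (b - a)) ^ 2 * (0 - ((b - a)⁻¹ * ‖∫ x in a..b, F x‖) ^ 2 +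
        (b - a)⁻¹ * ∫ x in a..b, ‖F x‖ ^ 2)) := by field_simp; ring
    _ ≤ (b - a) * ((b - a)⁻¹ * ∫ x in a..b, ‖f x‖ ^ 2) := by gcongr
    _ = _ := by field_simp

theorem wirtinger_of_eq_primitive {a b : ℝ} (hab : a < b) {F f : ℝ → ℝ}
    (hf : IntervalIntegrable f volume a b) (hf2 : IntervalIntegrable (fun t => f t ^ 2) volume a b)
    (hF : ∀ x ∈ Icc a b, F x = ∫ t in a..x, f t) (hFb : F b = 0) :
    (2 * π / (b - a)) ^ 2 * ((∫ x in a..b, F x ^ 2) - (∫ x in a..b, F x) ^ 2 / (b - a)) ≤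
      ∫ x in a..b, f x ^ 2 := by
  have hf_L2 : MemLp (fun t => (f t : ℂ)) 2 (volume.restrict (Ioc a b)) :=
    ((memLp_two_iff_integrable_sq hf.1.aestronglyMeasurable).2 hf2.1).ofReal
  have hf0 : ∫ t in a..b, (f t : ℂ) = 0 := by
    rw [intervalIntegral.integral_ofReal, ← hF b (right_mem_Icc.2 hab.le), hFb, ofReal_zero]
  have hprim : EqOn (fun x => ∫ t in a..x, (f t : ℂ)) (fun x => (F x : ℂ)) (uIcc a b) := by
    intro x hx
    rw [uIcc_of_le hab.le] at hx
    simp only [intervalIntegral.integral_ofReal, hF x hx]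
  have hF_sq : ∫ x in a..b, ‖∫ t in a..x, (f t : ℂ)‖ ^ 2 = ∫ x in a..b, F x ^ 2 :=
    integral_congr fun x hx => by simp only [hprim hx, norm_real, Real.norm_eq_abs, sq_abs]
  have hF_mean : ‖∫ x in a..b, ∫ t in a..x, (f t : ℂ)‖ ^ 2 = (∫ x in a..b, F x) ^ 2 := by
    rw [integral_congr hprim, intervalIntegral.integral_ofReal, norm_real, Real.norm_eq_abs,
      sq_abs]
  have hf_sq : ∫ x in a..b, ‖(f x : ℂ)‖ ^ 2 = ∫ x in a..b, f x ^ 2 := by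
    simp only [norm_real, Real.norm_eq_abs, sq_abs]
  simpa only [hF_sq, hF_mean, hf_sq] using wirtinger_primitive hab hf_L2 hf0

theorem poincare_of_wirtinger {θ μ ν m : ℝ} (hθ : 0 < θ) (hν : 0 ≤ ν)
    (hW : (2 * π / (2 * θ)) ^ 2 * (ν - m ^ 2 / (2 * θ)) ≤ μ)
    (hm : m ^ 2 ≤ θ * (π ^ 2 - θ ^ 2) / (2 * π ^ 2) * ν) :
    (1/4) * (1 - θ^2/π^2) * μ + (1/2) * (π^2/θ^2 - 1) * ν ≤ μ - ν := by
  have hW' : π ^ 2 * (2 * θ * ν - m ^ 2) ≤ 2 * θ ^ 3 * μ := by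
    rw [show (2 * π / (2 * θ)) ^ 2 * (ν - m ^ 2 / (2 * θ)) =
      π ^ 2 * (2 * θ * ν - m ^ 2) / (2 * θ ^ 3) by field_simp,
      div_le_iff₀ (by positivity)] at hW
    linarith
  have hm' : 2 * π ^ 2 * m ^ 2 ≤ θ * (π ^ 2 - θ ^ 2) * ν := by
    rw [div_mul_eq_mul_div, le_div_iff₀ (by positivity)] at hm
    linarith
  have hμ : (3 * π ^ 2 + θ ^ 2) * ν ≤ 4 * θ ^ 2 * μ :=
    le_of_mul_le_mul_left (by nlinarith) hθ
  have hμ' : 2 * π ^ 2 * (π ^ 2 + θ ^ 2) * ν ≤ θ ^ 2 * (3 * π ^ 2 + θ ^ 2) * μ := by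
    nlinarith [mul_le_mul_of_nonneg_left hμ (by positivity : (0 : ℝ) ≤ 3 * π ^ 2 + θ ^ 2),
      mul_nonneg (sq_nonneg (π ^ 2 - θ ^ 2)) hν]
  calc _ = μ - ν - (θ ^ 2 * (3 * π ^ 2 + θ ^ 2) * μ - 2 * π ^ 2 * (π ^ 2 + θ ^ 2) * ν) /
        (4 * π ^ 2 * θ ^ 2) := by field_simp; ring
    _ ≤ μ - ν := sub_le_self _ (div_nonneg (sub_nonneg.2 hμ') (by positivity))

/-- Poincaré-type inequality for functions with small mean. -/
theorem stmt5 (θ : ℝ) (hθ : θ ∈ Set.Ioo 0 π) (u u' : ℝ → ℝ)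
    (hu : MemW120 θ u u')
    (hmean : (∫ t in (-θ)..θ, u t)^2 ≤
      (1 / ((1/θ) * (2*π^2 / (π^2 - θ^2)))) * ∫ t in (-θ)..θ, (u t)^2) :
    (∫ t in (-θ)..θ, ((u' t)^2 - (u t)^2)) ≥
      (1/4) * (1 - θ^2/π^2) * (∫ t in (-θ)..θ, (u' t)^2) +
      (1/2) * (π^2/θ^2 - 1) * ∫ t in (-θ)..θ, (u t)^2 := by
  obtain ⟨hu'_int, hu'2_int, hu_prim, hu_θ⟩ := hu
  have hab : -θ < θ := by linarith [hθ.1]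
  have hu2_int : IntervalIntegrable (fun t => u t ^ 2) volume (-θ) θ :=
    ((continuousOn_Icc_of_eq_primitive hab.le hu'_int hu_prim).pow 2).intervalIntegrable_of_Icc
      hab.le
  have hW := wirtinger_of_eq_primitive hab hu'_int hu'2_int hu_prim hu_θ
  rw [show θ - -θ = 2 * θ by ring] at hW
  have hπθ : π ^ 2 - θ ^ 2 ≠ 0 := (sub_pos.2 (pow_lt_pow_left₀ hθ.2 hθ.1.le two_ne_zero)).ne'
  have hM : 1 / ((1/θ) * (2*π^2 / (π^2 - θ^2))) = θ * (π ^ 2 - θ ^ 2) / (2 * π ^ 2) := by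
    field_simp
  rw [hM] at hmean
  rw [integral_sub hu'2_int hu2_int, ge_iff_le]
  exact poincare_of_wirtinger hθ.1 (integral_nonneg hab.le fun _ _ => sq_nonneg _) hW hmean
end

section
/- For every u ∈ W₀^{1,2}(-θ,θ), one has ∫_{-θ}^{θ} ((u')² - u²) ≥ (1 - (θ/π)²) ∫_{-θ}^{θ} (u')² - (1/(2θ)) (∫_{-θ}^{θ} u)². -/
open Real MeasureTheory Set intervalIntegral

/-!
Since `u(-θ) = u(θ) = 0`, `u` is the restriction of a `2θ`-periodic function. For its Fourier
coefficients on `[-θ, θ]` and `n ≠ 0`, integration by parts gives `cₙ(u) = 2θ / (2πin) · cₙ(u')`,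
so `|cₙ(u)| ≤ (θ/π) |cₙ(u')|`, while `c₀(u)` is the mean of `u`. Parseval's identity then yields Wirtinger's inequality
`∫ u² ≤ (1/(2θ)) (∫ u)² + (θ/π)² ∫ (u')²`, which is the claim rearranged.
-/

/-- The primitive need not be differentiable everywhere, so the usual integration by parts does
not apply; instead this is Fubini on the triangle `t ≤ x`. -/
theorem integral_mul_primitive_eq {a b : ℝ} (hab : a ≤ b) {f g G : ℝ → ℂ}
    (hf : IntervalIntegrable f volume a b) (hg : Continuous g)
    (hG : ∀ x, HasDerivAt G (g x) x) :
    ∫ x in a..b, g x * ∫ t in a..x, f t = ∫ t in a..b, f t * (G b - G t) := by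
  set F : ℝ → ℝ → ℂ := fun x t => {t | t ≤ x}.indicator (fun t => g x * f t) t
  have hF_inner : ∀ x ∈ Icc a b, ∫ t in a..b, F x t = g x * ∫ t in a..x, f t := fun x hx => by
    rw [intervalIntegral.integral_indicator hx, intervalIntegral.integral_const_mul]
  have hF_outer : ∀ t ∈ Icc a b, ∫ x in a..b, F x t = f t * (G b - G t) := fun t ht => by
    have hsplit : ∀ᵐ x, x ∈ uIoc a b →
        F x t = g x * f t - {x | x ≤ t}.indicator (fun x => g x * f t) x := by
      filter_upwards [Measure.ae_ne volume t] with x hxt _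
      by_cases h : x ≤ t
      · simp [F, h, (lt_of_le_of_ne h hxt).not_ge]
      · simp [F, h, (not_le.mp h).le]
    have hgi : ∀ c d, IntervalIntegrable (fun x => g x * f t) volume c d := fun c d =>
      (hg.mul continuous_const).intervalIntegrable c d
    rw [intervalIntegral.integral_congr_ae hsplit, intervalIntegral.integral_sub (hgi a b),
      intervalIntegral.integral_indicator ht,
      intervalIntegral.integral_interval_sub_left (hgi a b) (hgi a t),
      intervalIntegral.integral_mul_const,
      integral_eq_sub_of_hasDerivAt (fun x _ => hG x) (hg.intervalIntegrable t b), mul_comm]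
    exact intervalIntegrable_iff.mpr
      ((intervalIntegrable_iff.mp (hgi a b)).indicator measurableSet_Iic)
  have hF_int : IntegrableOn (Function.uncurry F) (uIoc a b ×ˢ uIoc a b) := by
    have hprod : IntegrableOn (fun p : ℝ × ℝ => g p.1 * f p.2) (uIoc a b ×ˢ uIoc a b) := by
      rw [IntegrableOn, Measure.volume_eq_prod, ← Measure.prod_restrict]
      exact hg.integrableOn_uIoc.mul_prod hf.def'
    exact hprod.indicator (measurableSet_le measurable_snd measurable_fst)
  calc ∫ x in a..b, g x * ∫ t in a..x, f t = ∫ x in a..b, ∫ t in a..b, F x t :=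
        (intervalIntegral.integral_congr fun x hx => hF_inner x (uIcc_of_le hab ▸ hx)).symm
    _ = ∫ t in a..b, ∫ x in a..b, F x t := intervalIntegral_intervalIntegral_swap hF_int
    _ = ∫ t in a..b, f t * (G b - G t) :=
        intervalIntegral.integral_congr fun t ht => hF_outer t (uIcc_of_le hab ▸ ht)

theorem fourierCoeffOn_primitive {a b : ℝ} (hab : a < b) {f : ℝ → ℂ}
    (hf : IntervalIntegrable f volume a b) (hf0 : ∫ x in a..b, f x = 0) {n : ℤ} (hn : n ≠ 0) :
    fourierCoeffOn hab (fun x => ∫ t in a..x, f t) n =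
      (b - a) / (2 * π * Complex.I * n) * fourierCoeffOn hab f n := by
  have hT : Fact (0 < b - a) := ⟨sub_pos.mpr hab⟩
  set e : ℝ → ℂ := fun x => fourier (-n) (x : AddCircle (b - a))
  set C : ℂ := (b - a : ℝ) / (-2 * π * Complex.I * n)
  have he : Continuous e := (map_continuous _).comp (AddCircle.continuous_mk' _)
  have hparts : ∫ x in a..b, e x * ∫ t in a..x, f t = -C * ∫ x in a..b, e x * f x := by
    rw [integral_mul_primitive_eq hab.le hf he (has_antideriv_at_fourier_neg hT hn)]
    simp_rw [mul_sub]
    rw [intervalIntegral.integral_sub (hf.mul_const _) (hf.mul_continuousOn (by fun_prop)),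
      intervalIntegral.integral_mul_const, hf0, zero_mul, zero_sub,
      ← intervalIntegral.integral_const_mul, ← intervalIntegral.integral_neg]
    congr 1 with x
    ring
  simp only [fourierCoeffOn_eq_integral, smul_eq_mul]
  rw [hparts, show -C = (b - a) / (2 * π * Complex.I * n) by simp only [C]; push_cast; ring]
  exact (mul_smul_comm _ _ _).symm

theorem norm_fourierCoeffOn_primitive_le {a b : ℝ} (hab : a < b) {f : ℝ → ℂ}
    (hf : IntervalIntegrable f volume a b) (hf0 : ∫ x in a..b, f x = 0) {n : ℤ} (hn : n ≠ 0) :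
    ‖fourierCoeffOn hab (fun x => ∫ t in a..x, f t) n‖ ≤
      (b - a) / (2 * π) * ‖fourierCoeffOn hab f n‖ := by
  rw [fourierCoeffOn_primitive hab hf hf0 hn, norm_mul]
  gcongr
  have hn1 : (1 : ℝ) ≤ |(n : ℝ)| := by exact_mod_cast Int.one_le_abs hn
  rw [← Complex.ofReal_sub, norm_div, norm_mul, norm_mul, norm_mul, Complex.norm_real,
    Complex.norm_real, Real.norm_of_nonneg (sub_pos.mpr hab).le, Real.norm_of_nonneg pi_pos.le,
    Complex.norm_I, Complex.norm_intCast, Complex.norm_two, mul_one]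
  exact div_le_div_of_nonneg_left (sub_pos.mpr hab).le (by positivity)
    (le_mul_of_one_le_right (by positivity) hn1)

theorem fourierCoeffOn_zero {E : Type*} [NormedAddCommGroup E] [NormedSpace ℂ E]
    {a b : ℝ} (hab : a < b) (f : ℝ → E) :
    fourierCoeffOn hab f 0 = (1 / (b - a)) • ∫ x in a..b, f x := by
  simp [fourierCoeffOn_eq_integral]

theorem HasSum.le_add_mul_of_le_of_ne {β : Type*} [DecidableEq β] {x y : β → ℝ}
    {X Y K : ℝ} {i : β} (hx : HasSum x X) (hy : HasSum y Y) (hK : 0 ≤ K) (hyi : 0 ≤ y i)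
    (hxy : ∀ n, n ≠ i → x n ≤ K * y n) : X ≤ x i + K * Y := by
  refine hasSum_le (fun n => ?_) hx ((hasSum_ite_eq i (x i)).add (hy.mul_left K))
  by_cases h : n = i
  · subst h
    simpa using mul_nonneg hK hyi
  · simpa [h] using hxy n h

theorem ContinuousOn.memLp_restrict_Ioc {E : Type*} [NormedAddCommGroup E] {g : ℝ → E}
    {a b : ℝ} (hg : ContinuousOn g (Icc a b)) (p : ENNReal) :
    MemLp g p (volume.restrict (Ioc a b)) := by
  obtain ⟨C, hC⟩ := isCompact_Icc.exists_bound_of_continuousOn hg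
  refine MemLp.of_bound ((hg.mono Ioc_subset_Icc_self).aestronglyMeasurable measurableSet_Ioc) C ?_
  exact (ae_restrict_iff' measurableSet_Ioc).mpr
    (Filter.Eventually.of_forall fun x hx => hC x (Ioc_subset_Icc_self hx))

theorem integral_norm_sq_primitive_le {a b : ℝ} (hab : a < b) {f : ℝ → ℂ}
    (hf : MemLp f 2 (volume.restrict (Ioc a b))) (hf0 : ∫ x in a..b, f x = 0) :
    ∫ x in a..b, ‖∫ t in a..x, f t‖ ^ 2 ≤
      ‖∫ x in a..b, ∫ t in a..x, f t‖ ^ 2 / (b - a) +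
        ((b - a) / (2 * π)) ^ 2 * ∫ x in a..b, ‖f x‖ ^ 2 := by
  have hL : 0 < b - a := sub_pos.mpr hab
  have hfi : IntervalIntegrable f volume a b :=
    (intervalIntegrable_iff_integrableOn_Ioc_of_le hab.le).mpr (hf.integrable one_le_two)
  have hF : MemLp (fun x => ∫ t in a..x, f t) 2 (volume.restrict (Ioc a b)) := by
    refine ContinuousOn.memLp_restrict_Ioc ?_ 2
    simpa [uIcc_of_le hab.le] using continuousOn_primitive_interval' hfi left_mem_uIcc
  have hcoeff := (hasSum_sq_fourierCoeffOn hab hF).le_add_mul_of_le_of_ne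
    (hasSum_sq_fourierCoeffOn hab hf) (sq_nonneg ((b - a) / (2 * π))) (sq_nonneg _)
    (fun n hn => by
      rw [← mul_pow]
      exact pow_le_pow_left₀ (norm_nonneg _) (norm_fourierCoeffOn_primitive_le hab hfi hf0 hn) 2)
  rw [fourierCoeffOn_zero, norm_smul, smul_eq_mul, smul_eq_mul,
    Real.norm_of_nonneg (one_div_pos.mpr hL).le] at hcoeff
  have h := mul_le_mul_of_nonneg_left hcoeff hL.le
  rw [mul_inv_cancel_left₀ hL.ne'] at h
  refine h.trans_eq ?_
  field_simp

theorem integral_sq_primitive_le {a b : ℝ} (hab : a < b) {f : ℝ → ℝ}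
    (hf : MemLp f 2 (volume.restrict (Ioc a b))) (hf0 : ∫ x in a..b, f x = 0) :
    ∫ x in a..b, (∫ t in a..x, f t) ^ 2 ≤
      (∫ x in a..b, ∫ t in a..x, f t) ^ 2 / (b - a) +
        ((b - a) / (2 * π)) ^ 2 * ∫ x in a..b, f x ^ 2 := by
  have h := integral_norm_sq_primitive_le hab (f := fun x => (f x : ℂ)) hf.ofReal
    (by rw [intervalIntegral.integral_ofReal, hf0, Complex.ofReal_zero])
  simpa only [intervalIntegral.integral_ofReal, Complex.norm_real, Real.norm_eq_abs, sq_abs]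
    using h

/-- For every u ∈ W₀^{1,2}(-θ,θ):
∫ ((u')² - u²) ≥ (1-(θ/π)²)∫(u')² - (1/(2θ))(∫u)². -/
theorem stmt7 (θ : ℝ) (hθ : θ ∈ Set.Ioo 0 π) (u u' : ℝ → ℝ)
    (hu : MemW120 θ u u') :
    (∫ t in (-θ)..θ, ((u' t)^2 - (u t)^2)) ≥
      (1 - (θ/π)^2) * (∫ t in (-θ)..θ, (u' t)^2) -
      (1/(2*θ)) * (∫ t in (-θ)..θ, u t)^2 := by
  obtain ⟨hu'_int, hu'_sq, hu_eq, hu_θ⟩ := hu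
  have hθ0 : -θ < θ := by linarith [hθ.1]
  have hu_primitive : EqOn u (fun x => ∫ t in (-θ)..x, u' t) (uIcc (-θ) θ) := by
    rw [uIcc_of_le hθ0.le]
    exact hu_eq
  have hu'_L2 : MemLp u' 2 (volume.restrict (Ioc (-θ) θ)) :=
    (memLp_two_iff_integrable_sq hu'_int.1.aestronglyMeasurable).mpr hu'_sq.1
  have hu'_zero : ∫ t in (-θ)..θ, u' t = 0 := hu_eq θ (right_mem_Icc.mpr hθ0.le) ▸ hu_θ
  have hu_sq : IntervalIntegrable (fun t => u t ^ 2) volume (-θ) θ :=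
    ((continuousOn_primitive_interval' hu'_int left_mem_uIcc).congr hu_primitive).pow 2
      |>.intervalIntegrable
  have hwirtinger := integral_sq_primitive_le hθ0 hu'_L2 hu'_zero
  rw [← intervalIntegral.integral_congr hu_primitive,
    ← intervalIntegral.integral_congr (fun x hx => congrArg (· ^ 2) (hu_primitive hx)),
    show θ - -θ = 2 * θ by ring, mul_div_mul_left _ _ two_ne_zero] at hwirtinger
  rw [intervalIntegral.integral_sub hu'_sq hu_sq, ge_iff_le]
  linear_combination hwirtinger
end

section
/- Interpolation inequality: if u ∈ C^{1,1}([0,s]) for some s > 0, then the sup norm of u' on [0,s] is bounded by 2·‖u‖_{L¹(0,s)}^{1/3}·‖u''‖_{L^∞(0,s)}^{2/3} + (4/s²)·‖u‖_{L¹(0,s)}. -/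
/-!
Fix x ∈ [0, s] and an interval [a, b] ⊆ [0, s] of length h containing x. Integrating by parts
against the tent function y ↦ min (y - a) (b - y), whose slope is ±1, gives
|∫ tent · u'| ≤ ∫ |u|, while the Lipschitz bound on u' gives
|∫ tent · (u' - u'(x))| ≤ Λ ∫ tent(y) |y - x| dy ≤ Λ h³/8. Since ∫ tent = h²/4, this yields
|u'(x)| ≤ 4 ‖u‖₁ / h² + Λ h / 2 for every h ∈ (0, s], and the choice
h = 2 (‖u‖₁ / Λ)^{1/3} (or h = s if that is larger than s) gives the inequality.
-/

open Real MeasureTheory Set intervalIntegral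

def tent (a b y : ℝ) : ℝ := min (y - a) (b - y)

theorem continuous_tent (a b : ℝ) : Continuous (tent a b) := by
  unfold tent; fun_prop

section Tent

variable {a b : ℝ}

theorem tent_nonneg {y : ℝ} (hy : y ∈ Icc a b) : 0 ≤ tent a b y :=
  le_min (sub_nonneg.2 hy.1) (sub_nonneg.2 hy.2)

theorem tent_add_sub (y : ℝ) : tent a b (a + b - y) = tent a b y := by
  simp only [tent, min_comm (y - a)]
  ring_nf

theorem integral_tent_mul (hab : a ≤ b) {f : ℝ → ℝ} (hf : IntervalIntegrable f volume a b) :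
    ∫ y in a..b, tent a b y * f y
      = (∫ y in a..(a + b) / 2, (y - a) * f y) + ∫ y in (a + b) / 2..b, (b - y) * f y := by
  have hm : (a + b) / 2 ∈ uIcc a b := by rw [uIcc_of_le hab]; constructor <;> linarith
  have htf := hf.continuousOn_mul (continuous_tent a b).continuousOn
  rw [← integral_add_adjacent_intervals (htf.mono_set (uIcc_subset_uIcc_left hm))
    (htf.mono_set (uIcc_subset_uIcc_right hm))]
  congr 1
  · refine integral_congr fun y hy => ?_
    rw [uIcc_of_le (by linarith)] at hy
    simp only [tent, min_eq_left (by linarith [hy.2] : y - a ≤ b - y)]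
  · refine integral_congr fun y hy => ?_
    rw [uIcc_of_le (by linarith)] at hy
    simp only [tent, min_eq_right (by linarith [hy.1] : b - y ≤ y - a)]

theorem integral_tent (hab : a ≤ b) : ∫ y in a..b, tent a b y = (b - a) ^ 2 / 4 := by
  have h := integral_tent_mul hab (f := fun _ => 1) intervalIntegrable_const
  simp only [mul_one] at h
  rw [h, integral_comp_sub_right (fun y => y), integral_comp_sub_left (fun y => y)]
  simp only [integral_id]
  ring

theorem integral_tent_mul_abs_sub_le (x : ℝ) (hx : x ∈ Icc a b) :
    ∫ y in a..b, tent a b y * |y - x| ≤ (b - a) ^ 3 / 8 := by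
  have hab : a ≤ b := hx.1.trans hx.2
  rcases hab.eq_or_lt with rfl | hab'
  · simp
  have hint : ∀ g : ℝ → ℝ, Continuous g →
      IntervalIntegrable (fun y => tent a b y * g y) volume a b :=
    fun g hg => ((continuous_tent a b).mul hg).intervalIntegrable a b
  set I := ∫ y in a..b, tent a b y * (y - a)
  have hsymm : ∫ y in a..b, tent a b y * (b - y) = I := by
    have h := integral_comp_sub_left (fun y => tent a b y * (y - a)) (a + b) (a := a) (b := b)
    simp only [tent_add_sub, add_sub_cancel_right, add_sub_cancel_left] at h
    exact (integral_congr fun y _ => by ring).trans h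
  have hsum : I + ∫ y in a..b, tent a b y * (b - y) = (b - a) ^ 3 / 4 := by
    rw [← integral_add (hint _ (by fun_prop)) (hint _ (by fun_prop)),
      integral_congr (g := fun y => (b - a) * tent a b y) fun y _ => by ring,
      intervalIntegral.integral_const_mul, integral_tent hab]
    ring
  -- |y - x| is convex in x, so it lies below its chord between x = a and x = b.
  have hconv : ∀ y ∈ Icc a b, (b - a) * (tent a b y * |y - x|)
      ≤ (b - x) * (tent a b y * (y - a)) + (x - a) * (tent a b y * (b - y)) := by
    intro y hy
    have habs : (b - a) * |y - x| ≤ (b - x) * (y - a) + (x - a) * (b - y) := by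
      rcases le_total x y with hxy | hxy
      · rw [abs_of_nonneg (sub_nonneg.2 hxy)]; nlinarith [hx.1, hy.2]
      · rw [abs_of_nonpos (sub_nonpos.2 hxy)]; nlinarith [hx.2, hy.1]
    nlinarith [tent_nonneg hy]
  have hmono := integral_mono_on hab ((hint _ (by fun_prop)).const_mul (b - a))
    (((hint _ (by fun_prop)).const_mul (b - x)).add ((hint _ (by fun_prop)).const_mul (x - a)))
    hconv
  rw [intervalIntegral.integral_const_mul, integral_add ((hint _ (by fun_prop)).const_mul (b - x))
    ((hint _ (by fun_prop)).const_mul (x - a)), intervalIntegral.integral_const_mul,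
    intervalIntegral.integral_const_mul, hsymm] at hmono
  have hI : I = (b - a) ^ 3 / 8 := by linarith
  refine le_of_mul_le_mul_left ?_ (sub_pos.2 hab')
  calc (b - a) * ∫ y in a..b, tent a b y * |y - x| ≤ (b - x) * I + (x - a) * I := hmono
    _ = (b - a) * ((b - a) ^ 3 / 8) := by rw [hI]; ring

variable {u u' : ℝ → ℝ}

theorem integral_tent_mul_deriv (hab : a ≤ b)
    (hu : ∀ y ∈ Icc a b, HasDerivWithinAt u (u' y) (Icc a b) y) (hu' : ContinuousOn u' (Icc a b)) :
    ∫ y in a..b, tent a b y * u' y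
      = (∫ y in (a + b) / 2..b, u y) - ∫ y in a..(a + b) / 2, u y := by
  rw [integral_tent_mul hab ((hu'.mono (uIcc_of_le hab).subset).intervalIntegrable)]
  obtain ⟨ham, hmb⟩ : a ≤ (a + b) / 2 ∧ (a + b) / 2 ≤ b := ⟨by linarith, by linarith⟩
  set m := (a + b) / 2 with hm
  have hsub : ∀ c d, a ≤ c → c ≤ d → d ≤ b → uIcc c d ⊆ Icc a b := fun c d hc hcd hd => by
    rw [uIcc_of_le hcd]; exact Icc_subset_Icc hc hd
  have hcu : ContinuousOn u (Icc a b) := fun y hy => (hu y hy).continuousWithinAt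
  have hint : ∀ {f : ℝ → ℝ} {c d}, ContinuousOn f (Icc a b) → a ≤ c → c ≤ d → d ≤ b →
      IntervalIntegrable f volume c d := fun hf hc hcd hd =>
    (hf.mono (hsub _ _ hc hcd hd)).intervalIntegrable
  have hderiv : ∀ c d, a ≤ c → c ≤ d → d ≤ b →
      ∀ y ∈ uIcc c d, HasDerivWithinAt u (u' y) (uIcc c d) y := fun c d hc hcd hd y hy =>
    (hu y (hsub c d hc hcd hd hy)).mono (hsub c d hc hcd hd)
  have hleft := integral_deriv_mul_eq_sub_of_hasDerivWithinAt
    (u := fun y => y - a) (u' := fun _ => 1)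
    (fun y _ => ((hasDerivAt_id y).sub_const a).hasDerivWithinAt) (hderiv a m le_rfl ham hmb)
    intervalIntegrable_const (hint hu' le_rfl ham hmb)
  have hright := integral_deriv_mul_eq_sub_of_hasDerivWithinAt
    (u := fun y => b - y) (u' := fun _ => -1)
    (fun y _ => ((hasDerivAt_id y).const_sub b).hasDerivWithinAt) (hderiv m b ham hmb le_rfl)
    intervalIntegrable_const (hint hu' ham hmb le_rfl)
  simp only [one_mul, neg_one_mul] at hleft hright
  rw [integral_add (hint hcu le_rfl ham hmb) (hint (by fun_prop) le_rfl ham hmb)] at hleft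
  rw [integral_add (hint (f := fun y => -u y) hcu.neg ham hmb le_rfl)
    (hint (by fun_prop) ham hmb le_rfl), intervalIntegral.integral_neg] at hright
  rw [show b - m = m - a by rw [hm]; ring] at hright
  simp only [sub_self, zero_mul, sub_zero, zero_sub] at hleft hright
  linarith

theorem abs_integral_tent_mul_deriv_le (hab : a ≤ b)
    (hu : ∀ y ∈ Icc a b, HasDerivWithinAt u (u' y) (Icc a b) y) (hu' : ContinuousOn u' (Icc a b)) :
    |∫ y in a..b, tent a b y * u' y| ≤ ∫ y in a..b, |u y| := by
  obtain ⟨ham, hmb⟩ : a ≤ (a + b) / 2 ∧ (a + b) / 2 ≤ b := ⟨by linarith, by linarith⟩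
  have hcu : ContinuousOn u (Icc a b) := fun y hy => (hu y hy).continuousWithinAt
  rw [integral_tent_mul_deriv hab hu hu',
    ← integral_add_adjacent_intervals (b := (a + b) / 2)
      ((hcu.abs.mono (Icc_subset_Icc le_rfl hmb)).intervalIntegrable_of_Icc ham)
      ((hcu.abs.mono (Icc_subset_Icc ham le_rfl)).intervalIntegrable_of_Icc hmb)]
  calc _ ≤ |∫ y in (a + b) / 2..b, u y| + |∫ y in a..(a + b) / 2, u y| := abs_sub _ _
    _ ≤ _ := by
      rw [add_comm]
      exact add_le_add (abs_integral_le_integral_abs ham) (abs_integral_le_integral_abs hmb)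

theorem abs_deriv_mul_le_of_lipschitzOnWith {Λ : NNReal}
    (hu : ∀ y ∈ Icc a b, HasDerivWithinAt u (u' y) (Icc a b) y)
    (hlip : LipschitzOnWith Λ u' (Icc a b)) {x : ℝ} (hx : x ∈ Icc a b) :
    |u' x| * ((b - a) ^ 2 / 4) ≤ (∫ y in a..b, |u y|) + Λ * (b - a) ^ 3 / 8 := by
  have hab : a ≤ b := hx.1.trans hx.2
  have hu' : ContinuousOn u' (Icc a b) := hlip.continuousOn
  have hint : IntervalIntegrable (fun y => tent a b y * u' y) volume a b :=
    ((continuous_tent a b).continuousOn.mul hu').intervalIntegrable_of_Icc hab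
  have hsplit : u' x * ((b - a) ^ 2 / 4)
      = (∫ y in a..b, tent a b y * u' y) - ∫ y in a..b, tent a b y * (u' y - u' x) := by
    simp only [mul_sub]
    have hconst : IntervalIntegrable (fun y => tent a b y * u' x) volume a b :=
      ((continuous_tent a b).mul continuous_const).intervalIntegrable a b
    rw [integral_sub hint hconst, intervalIntegral.integral_mul_const, integral_tent hab]
    ring
  have hremainder : |∫ y in a..b, tent a b y * (u' y - u' x)|
      ≤ Λ * ∫ y in a..b, tent a b y * |y - x| := by
    rw [← intervalIntegral.integral_const_mul]
    refine norm_integral_le_of_norm_le (f := fun y => tent a b y * (u' y - u' x))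
      (g := fun y => Λ * (tent a b y * |y - x|)) hab
      (Filter.Eventually.of_forall fun y hy => ?_)
      ((((continuous_tent a b).mul (by fun_prop : Continuous fun y => |y - x|)).const_mul _
        ).intervalIntegrable a b)
    have hy : y ∈ Icc a b := Ioc_subset_Icc_self hy
    have hlip_y : |u' y - u' x| ≤ Λ * |y - x| := by
      simpa only [Real.dist_eq] using hlip.dist_le_mul y hy x hx
    rw [Real.norm_eq_abs, abs_mul, abs_of_nonneg (tent_nonneg hy)]
    calc tent a b y * |u' y - u' x| ≤ tent a b y * (Λ * |y - x|) :=
          mul_le_mul_of_nonneg_left hlip_y (tent_nonneg hy)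
      _ = _ := by ring
  calc |u' x| * ((b - a) ^ 2 / 4) = |u' x * ((b - a) ^ 2 / 4)| := by
        rw [abs_mul, abs_of_nonneg (by positivity : (0 : ℝ) ≤ (b - a) ^ 2 / 4)]
    _ ≤ |∫ y in a..b, tent a b y * u' y| + |∫ y in a..b, tent a b y * (u' y - u' x)| := by
        rw [hsplit]; exact abs_sub _ _
    _ ≤ (∫ y in a..b, |u y|) + Λ * (b - a) ^ 3 / 8 := by
        have := integral_tent_mul_abs_sub_le x hx
        have := abs_integral_tent_mul_deriv_le hab hu hu'
        have : (Λ : ℝ) * ∫ y in a..b, tent a b y * |y - x| ≤ Λ * ((b - a) ^ 3 / 8) := by gcongr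
        linarith

end Tent

theorem abs_deriv_le_of_lipschitzOnWith {u u' : ℝ → ℝ} {c d : ℝ} {Λ : NNReal}
    (hu : ∀ y ∈ Icc c d, HasDerivWithinAt u (u' y) (Icc c d) y)
    (hlip : LipschitzOnWith Λ u' (Icc c d)) {x : ℝ} (hx : x ∈ Icc c d) {h : ℝ} (hh : 0 < h)
    (hhd : h ≤ d - c) :
    |u' x| ≤ 4 / h ^ 2 * (∫ y in c..d, |u y|) + Λ * h / 2 := by
  set a := min x (d - h)
  have hca : c ≤ a := le_min hx.1 (by linarith)
  have hxa : a ≤ x := min_le_left _ _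
  have hxb : x - h ≤ a := le_min (by linarith) (by linarith [hx.2])
  have hbd : a + h ≤ d := by linarith [min_le_right x (d - h)]
  have hsub : Icc a (a + h) ⊆ Icc c d := Icc_subset_Icc hca hbd
  have hcu : ContinuousOn u (Icc c d) := fun y hy => (hu y hy).continuousWithinAt
  have hlocal := abs_deriv_mul_le_of_lipschitzOnWith (fun y hy => (hu y (hsub hy)).mono hsub)
    (hlip.mono hsub) ⟨hxa, by linarith⟩
  have hmono : ∫ y in a..a + h, |u y| ≤ ∫ y in c..d, |u y| :=
    integral_mono_interval hca (by linarith) hbd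
      (Filter.Eventually.of_forall fun y => abs_nonneg _)
      (hcu.abs.intervalIntegrable_of_Icc (by linarith))
  rw [add_sub_cancel_left] at hlocal
  calc |u' x| = |u' x| * (h ^ 2 / 4) * (4 / h ^ 2) := by field_simp
    _ ≤ ((∫ y in c..d, |u y|) + Λ * h ^ 3 / 8) * (4 / h ^ 2) := by gcongr; linarith
    _ = _ := by field_simp; ring

open Filter Topology in
theorem le_two_mul_mul_sq_add_of_forall_le {P Q s c : ℝ} (hP : 0 ≤ P) (hs : 0 < s)
    (hc : ∀ h, 0 < h → h ≤ s → c ≤ 4 / h ^ 2 * P ^ 3 + Q ^ 3 * h / 2) :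
    c ≤ 2 * P * Q ^ 2 + 4 / s ^ 2 * P ^ 3 := by
  rcases le_or_gt (Q * s) (2 * P) with hQs | hQs
  · have hQ3 : Q ^ 3 * s / 2 ≤ 2 * P * Q ^ 2 := by
      nlinarith [mul_le_mul_of_nonneg_left hQs (sq_nonneg Q), mul_nonneg hP (sq_nonneg Q)]
    linarith [hc s hs le_rfl]
  rcases hP.eq_or_lt with rfl | hP
  · have hlim : Tendsto (fun h => Q ^ 3 * h / 2) (𝓝[>] 0) (𝓝 0) := by
      have : Continuous fun h : ℝ => Q ^ 3 * h / 2 := by fun_prop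
      simpa using this.continuousWithinAt.tendsto (x := 0) (s := Ioi 0)
    have hev : ∀ᶠ h in 𝓝[>] 0, c ≤ Q ^ 3 * h / 2 :=
      mem_of_superset (Ioo_mem_nhdsGT hs) fun h hh => by simpa using hc h hh.1 hh.2.le
    simpa using ge_of_tendsto hlim hev
  -- the optimal scale h = 2P/Q lies in (0, s)
  have hQ : 0 < Q := by nlinarith
  have hopt : 4 / (2 * P / Q) ^ 2 * P ^ 3 + Q ^ 3 * (2 * P / Q) / 2 = 2 * P * Q ^ 2 := by
    field_simp; ring
  have := hc (2 * P / Q) (by positivity) ((div_le_iff₀ hQ).2 (by linarith))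
  have : 0 ≤ 4 / s ^ 2 * P ^ 3 := by positivity
  linarith

/-- Interpolation inequality: if u ∈ C^{1,1}([0,s]) (u' is a derivative of u on
[0,s] which is Λ-Lipschitz there, Λ being the L^∞ norm of u''), then
‖u'‖_{C⁰} ≤ 2‖u‖_{L¹}^{1/3}Λ^{2/3} + (4/s²)‖u‖_{L¹}. -/
theorem stmt8 (s : ℝ) (hs : 0 < s) (u u' : ℝ → ℝ) (Λ : NNReal)
    (hderiv : ∀ x ∈ Set.Icc 0 s, HasDerivWithinAt u (u' x) (Set.Icc 0 s) x)
    (hlip : LipschitzOnWith Λ u' (Set.Icc 0 s)) :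
    ∀ x ∈ Set.Icc 0 s,
      |u' x| ≤ 2 * (∫ t in (0:ℝ)..s, |u t|) ^ ((1:ℝ)/3) * (Λ:ℝ) ^ ((2:ℝ)/3)
        + (4/s^2) * ∫ t in (0:ℝ)..s, |u t| := by
  intro x hx
  have hL : 0 ≤ ∫ t in (0:ℝ)..s, |u t| := integral_nonneg hs.le fun t _ => abs_nonneg _
  have hcube : ∀ {r : ℝ}, 0 ≤ r → (r ^ ((1:ℝ)/3)) ^ 3 = r := fun hr => by
    rw [one_div]; exact_mod_cast rpow_inv_natCast_pow hr three_ne_zero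
  have hsq : (Λ : ℝ) ^ ((2:ℝ)/3) = ((Λ : ℝ) ^ ((1:ℝ)/3)) ^ 2 := by
    rw [← rpow_mul_natCast Λ.coe_nonneg]; norm_num
  have key := le_two_mul_mul_sq_add_of_forall_le (Q := (Λ : ℝ) ^ ((1:ℝ)/3))
    (rpow_nonneg hL _) hs fun h hh hhs => by
      rw [hcube hL, hcube Λ.coe_nonneg]
      exact abs_deriv_le_of_lipschitzOnWith hderiv hlip hx hh (by simpa using hhs)
  rwa [hcube hL, ← hsq] at key
end

section
/- With r₂ = 1 and r₁ = r ∈ (0,1), setting r₀ = r/(1-r), one has tan(θ₀) = √3·(1-r)/(1+r) where θ₀ is the unique angle in (0, π/3) with r₀ sin θ₀ = sin(2π/3 + θ₀) (equivalently determined by the double bubble constraints θ₁ = 2π/3 - θ₀, θ₂ = 2π/3 + θ₀, r₀ sin θ₀ = r sin θ₁ = sin θ₂). -/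
open Real Set

/-- With r₂ = 1, r₁ = r ∈ (0,1) and r₀ = r/(1-r), there is a unique angle
θ₀ ∈ (0,π/3) with r₀ sin θ₀ = sin(2π/3 + θ₀), and any such θ₀ satisfies
tan θ₀ = √3 (1-r)/(1+r). -/
theorem stmt16 (r : ℝ) (hr : r ∈ Set.Ioo (0:ℝ) 1) :
    (∃! θ₀ : ℝ, θ₀ ∈ Set.Ioo 0 (π/3) ∧
      (r/(1-r)) * Real.sin θ₀ = Real.sin (2*π/3 + θ₀)) ∧
    (∀ θ₀ ∈ Set.Ioo 0 (π/3),
      (r/(1-r)) * Real.sin θ₀ = Real.sin (2*π/3 + θ₀) →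
      Real.tan θ₀ = Real.sqrt 3 * (1-r)/(1+r)) := by
  obtain ⟨hr0, hr1⟩ := hr
  have h1r : (0:ℝ) < 1 - r := by linarith
  have h1r' : (0:ℝ) < 1 + r := by linarith
  have hne : (1 - r) ≠ 0 := ne_of_gt h1r
  have hne' : (1 + r) ≠ 0 := ne_of_gt h1r'
  have hs3 : (0:ℝ) < Real.sqrt 3 := Real.sqrt_pos.mpr (by norm_num)
  set c : ℝ := Real.sqrt 3 * (1-r)/(1+r) with hc
  have hc0 : 0 < c := by positivity
  have hclt : c < Real.sqrt 3 := by
    rw [hc, div_lt_iff₀ h1r']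
    nlinarith
  have hsin : ∀ θ : ℝ, Real.sin (2*π/3 + θ)
      = Real.sqrt 3 / 2 * Real.cos θ - 1/2 * Real.sin θ := by
    intro θ
    have h1 : Real.sin (2*π/3) = Real.sqrt 3 / 2 := by
      have h : (2*π/3 : ℝ) = π - π/3 := by ring
      rw [h, Real.sin_pi_sub, Real.sin_pi_div_three]
    have h2 : Real.cos (2*π/3) = -(1/2) := by
      have h : (2*π/3 : ℝ) = π - π/3 := by ring
      rw [h, Real.cos_pi_sub, Real.cos_pi_div_three]
    rw [Real.sin_add, h1, h2]; ring
  have key : ∀ θ ∈ Set.Ioo (0:ℝ) (π/3),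
      ((r/(1-r)) * Real.sin θ = Real.sin (2*π/3 + θ) ↔ Real.tan θ = c) := by
    rintro θ ⟨hθ0, hθ3⟩
    have hθlt : θ < π/2 := lt_trans hθ3 (by linarith [pi_pos])
    have hcos : 0 < Real.cos θ :=
      Real.cos_pos_of_mem_Ioo ⟨by linarith [pi_pos], hθlt⟩
    rw [hsin θ, Real.tan_eq_sin_div_cos, hc, div_eq_div_iff (ne_of_gt hcos) hne',
      div_mul_eq_mul_div, div_eq_iff hne]
    constructor
    · intro h; linear_combination 2 * h
    · intro h; linear_combination h / 2
  have harcpos : 0 < Real.arctan c := by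
    rw [← Real.arctan_zero]; exact Real.arctan_strictMono hc0
  have harclt : Real.arctan c < π/3 := by
    have h := Real.arctan_strictMono hclt
    have h3 : Real.arctan (Real.sqrt 3) = π/3 := by
      rw [← Real.tan_pi_div_three]
      exact Real.arctan_tan (by linarith [pi_pos]) (by linarith [pi_pos])
    linarith
  refine ⟨⟨Real.arctan c, ⟨⟨harcpos, harclt⟩, ?_⟩, ?_⟩, ?_⟩
  · rw [key _ ⟨harcpos, harclt⟩]
    exact Real.tan_arctan c
  · rintro θ ⟨hmem, heq⟩
    have h1 : Real.tan θ = c := (key θ hmem).mp heq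
    have hmem' : θ ∈ Set.Ioo (-(π/2)) (π/2) := by
      obtain ⟨a, b⟩ := hmem
      exact ⟨by linarith [pi_pos], by linarith [pi_pos]⟩
    have hmem'' : Real.arctan c ∈ Set.Ioo (-(π/2)) (π/2) :=
      ⟨Real.neg_pi_div_two_lt_arctan c, Real.arctan_lt_pi_div_two c⟩
    exact Real.injOn_tan hmem' hmem'' (by rw [h1, Real.tan_arctan])
  · intro θ hmem heq
    exact (key θ hmem).mp heq
end

section
/- Perimeter formula for the standard double bubble: under the constraints θ₁ + θ₀ = 2π/3, θ₂ - θ₀ = 2π/3, r₀ sin θ₀ = r₁ sin θ₁ = r₂ sin θ₂, 1/r₁ = 1/r₂ + 1/r₀, and with m₁ = θ₁ r₁² + θ₀ r₀² - (√3/2) r₀ r₁ and m₂ = θ₂ r₂² - θ₀ r₀² + (√3/2) r₀ r₂, the total perimeter P = 2θ₁ r₁ + 2θ₂ r₂ + 2θ₀ r₀ satisfies P = 2(m₁/r₁ + m₂/r₂). -/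
open Real Set

theorem stmt17_general (θ₀ θ₁ θ₂ r₀ r₁ r₂ m₁ m₂ P : ℝ)
    (h0 : 0 < r₀) (h1 : 0 < r₁) (h2 : 0 < r₂)
    (he : 1/r₁ = 1/r₂ + 1/r₀)
    (hm1 : m₁ = θ₁*r₁^2 + θ₀*r₀^2 - (Real.sqrt 3/2)*r₀*r₁)
    (hm2 : m₂ = θ₂*r₂^2 - θ₀*r₀^2 + (Real.sqrt 3/2)*r₀*r₂)
    (hP : P = 2*θ₁*r₁ + 2*θ₂*r₂ + 2*θ₀*r₀) :
    P = 2*(m₁/r₁ + m₂/r₂) := by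
  have hsum : m₁ / r₁ + m₂ / r₂ = θ₁ * r₁ + θ₂ * r₂ + θ₀ * (r₀ ^ 2 * (1 / r₁ - 1 / r₂)) := by
    rw [hm1, hm2]
    field_simp
    ring
  have hcurv : r₀ ^ 2 * (1 / r₁ - 1 / r₂) = r₀ := by
    rw [he]
    field_simp
    ring
  rw [hsum, hcurv, hP]
  ring

/-- Perimeter formula for the standard double bubble:
P = 2(m₁/r₁ + m₂/r₂). -/
theorem stmt17 (θ₀ θ₁ θ₂ r₀ r₁ r₂ m₁ m₂ P : ℝ)
    (hθ₀ : θ₀ ∈ Set.Ioo 0 (π/3)) (hθ₁ : θ₁ ∈ Set.Ioo (π/3) (2*π/3))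
    (hθ₂ : θ₂ ∈ Set.Ioo (2*π/3) π)
    (h0 : 0 < r₀) (h1 : 0 < r₁) (h2 : 0 < r₂)
    (ha : θ₁ + θ₀ = 2*π/3) (hb : θ₂ - θ₀ = 2*π/3)
    (hc : r₀ * Real.sin θ₀ = r₁ * Real.sin θ₁)
    (hd : r₀ * Real.sin θ₀ = r₂ * Real.sin θ₂)
    (he : 1/r₁ = 1/r₂ + 1/r₀)
    (hm1 : m₁ = θ₁*r₁^2 + θ₀*r₀^2 - (Real.sqrt 3/2)*r₀*r₁)
    (hm2 : m₂ = θ₂*r₂^2 - θ₀*r₀^2 + (Real.sqrt 3/2)*r₀*r₂)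
    (hP : P = 2*θ₁*r₁ + 2*θ₂*r₂ + 2*θ₀*r₀) :
    P = 2*(m₁/r₁ + m₂/r₂) :=
  stmt17_general θ₀ θ₁ θ₂ r₀ r₁ r₂ m₁ m₂ P h0 h1 h2 he hm1 hm2 hP
end

section
/- Coercivity of the equal-area quadratic form: let m = 2π/3 + √3/4, g(θ) = cos θ / (2(sin θ − θ cos θ)), α₁ = α₂ = (1/4)g(√3/2) + g(2π/3) + 1/(2m), and α₃ = −(1/4)g(√3/2) + 1/(2m). Then α₁ > 0 and α₁α₂ − α₃² > 0; consequently there exists α* > 0 such that α₁ x² + α₂ y² + 2α₃ x y ≥ α*(x² + y²) for all real x, y. -/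
open Real Set

/-!
As `α₂ = α₁`, both `α₁` and `α₁² - α₃² = (α₁ - α₃)(α₁ + α₃)` are positive once
`α₁ ± α₃ > 0`. Since `g(2π/3) = -1 / (2√3 + 4π/3)`, the sum `α₁ + α₃ = g(2π/3) + 1/m` is positive
because `m < 2√3 + 4π/3`, and the difference `α₁ - α₃ = g(√3/2)/2 + g(2π/3)` is positive because
`g(θ) > cos θ / (2θ)` on `(0, π/2)` and `cos(√3/2) ≥ 1 - 3/8`.
-/

namespace Real

theorem sin_sub_mul_cos_pos {θ : ℝ} (h0 : 0 < θ) (hπ : θ < π) : 0 < sin θ - θ * cos θ := by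
  rcases lt_or_ge θ (π / 2) with hθ | hθ
  · have hcos : 0 < cos θ := cos_pos_of_mem_Ioo ⟨by linarith, hθ⟩
    have htan : θ < sin θ / cos θ := tan_eq_sin_div_cos θ ▸ lt_tan h0 hθ
    rw [lt_div_iff₀ hcos] at htan
    linarith
  · have hcos : cos θ ≤ 0 := cos_nonpos_of_pi_div_two_le_of_le hθ (by linarith)
    nlinarith [sin_pos_of_pos_of_lt_pi h0 hπ]

theorem cos_div_two_mul_lt_cos_div_two_mul_sin_sub_mul_cos {θ : ℝ} (h0 : 0 < θ) (hθ : θ < π / 2) :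
    cos θ / (2 * θ) < cos θ / (2 * (sin θ - θ * cos θ)) := by
  have hcos : 0 < cos θ := cos_pos_of_mem_Ioo ⟨by linarith, hθ⟩
  have hD : 0 < sin θ - θ * cos θ := sin_sub_mul_cos_pos h0 (by linarith [pi_pos])
  have hDθ : sin θ - θ * cos θ < θ := by nlinarith [sin_lt h0]
  gcongr

theorem cos_two_mul_pi_div_three : cos (2 * π / 3) = -(1 / 2) := by
  rw [show 2 * π / 3 = π - π / 3 by ring, cos_pi_sub, cos_pi_div_three]

theorem sin_two_mul_pi_div_three : sin (2 * π / 3) = √3 / 2 := by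
  rw [show 2 * π / 3 = π - π / 3 by ring, sin_pi_sub, sin_pi_div_three]

end Real

theorem five_div_eight_mul_sqrt_three_lt :
    5 / (8 * √3) < cos (√3 / 2) / (2 * (sin (√3 / 2) - √3 / 2 * cos (√3 / 2))) := by
  have h3 : √3 ^ 2 = 3 := sq_sqrt (by norm_num)
  have h3lt : √3 < 2 := by nlinarith [sqrt_nonneg 3]
  have hcos : 5 / 8 ≤ cos (√3 / 2) := by nlinarith [one_sub_sq_div_two_le_cos (x := √3 / 2)]
  calc 5 / (8 * √3) = 5 / 8 / (2 * (√3 / 2)) := by field_simp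
    _ ≤ cos (√3 / 2) / (2 * (√3 / 2)) := by gcongr
    _ < _ := cos_div_two_mul_lt_cos_div_two_mul_sin_sub_mul_cos (by positivity)
      (by linarith [pi_gt_three])

/-- Positive definiteness of a symmetric `2 × 2` matrix gives coercivity with constant
`det / trace`, a lower bound for the smallest eigenvalue. -/
theorem exists_pos_mul_sum_sq_le_of_det_pos {a b c : ℝ} (ha : 0 < a) (hdet : 0 < a * c - b ^ 2) :
    ∃ k > (0 : ℝ), ∀ x y : ℝ, k * (x ^ 2 + y ^ 2) ≤ a * x ^ 2 + c * y ^ 2 + 2 * b * x * y := by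
  have htr : 0 < a + c := by nlinarith [sq_nonneg b]
  refine ⟨(a * c - b ^ 2) / (a + c), div_pos hdet htr, fun x y => ?_⟩
  have key : (a + c) * (a * x ^ 2 + c * y ^ 2 + 2 * b * x * y) - (a * c - b ^ 2) * (x ^ 2 + y ^ 2)
      = (a * x + b * y) ^ 2 + (b * x + c * y) ^ 2 := by ring
  rw [div_mul_eq_mul_div, div_le_iff₀ htr]
  linarith [sq_nonneg (a * x + b * y), sq_nonneg (b * x + c * y)]

/-- Coercivity of the equal-area quadratic form. -/
theorem stmt19 :
    let m : ℝ := 2*π/3 + Real.sqrt 3/4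
    let g : ℝ → ℝ := fun θ => Real.cos θ / (2*(Real.sin θ - θ*Real.cos θ))
    let α₁ : ℝ := (1/4)*g (Real.sqrt 3/2) + g (2*π/3) + 1/(2*m)
    let α₂ : ℝ := α₁
    let α₃ : ℝ := -(1/4)*g (Real.sqrt 3/2) + 1/(2*m)
    0 < α₁ ∧ 0 < α₁*α₂ - α₃^2 ∧
      ∃ αs > (0:ℝ), ∀ x y : ℝ, α₁*x^2 + α₂*y^2 + 2*α₃*x*y ≥ αs*(x^2 + y^2) := by
  intro m g α₁ α₂ α₃
  have h3 : √3 ^ 2 = 3 := sq_sqrt (by norm_num)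
  have h3pos : 0 < √3 := by positivity
  have h3lt : √3 < 2 := by nlinarith
  have hπ : 3 < π := pi_gt_three
  have hg₁ : 5 / (8 * √3) < g (√3 / 2) := five_div_eight_mul_sqrt_three_lt
  have hg₂ : g (2 * π / 3) = -1 / (2 * √3 + 4 * π / 3) := by
    have hpos : 0 < 2 * √3 + 4 * π / 3 := by positivity
    simp only [g, cos_two_mul_pi_div_three, sin_two_mul_pi_div_three]
    rw [div_eq_div_iff (by linarith) hpos.ne']
    ring
  have hsum : 0 < α₁ + α₃ := by
    have hsum_eq : α₁ + α₃ = 1 / m - 1 / (2 * √3 + 4 * π / 3) := by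
      simp only [α₁, α₃, hg₂]; field_simp; ring
    rw [hsum_eq, sub_pos]
    gcongr
    simp only [m]; linarith
  have hdiff : 0 < α₁ - α₃ := by
    have hdiff_eq : α₁ - α₃ = g (√3 / 2) / 2 - 1 / (2 * √3 + 4 * π / 3) := by
      simp only [α₁, α₃, hg₂]; ring
    have hcompare : 1 / (2 * √3 + 4 * π / 3) < 5 / (16 * √3) := by
      rw [div_lt_div_iff₀ (by positivity) (by positivity)]; nlinarith
    have hhalf : 5 / (16 * √3) = 5 / (8 * √3) / 2 := by field_simp; ring
    linarith
  have hα₁ : 0 < α₁ := by linarith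
  have hdet : 0 < α₁ * α₂ - α₃ ^ 2 := by
    have hfactor : α₁ * α₂ - α₃ ^ 2 = (α₁ - α₃) * (α₁ + α₃) := by simp only [α₂]; ring
    rw [hfactor]; exact mul_pos hdiff hsum
  exact ⟨hα₁, hdet, exists_pos_mul_sum_sq_le_of_det_pos hα₁ hdet⟩
end
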